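/- Let T_1,…,T_n be operators on H with ∑_s T_s T_s* ≤ 1 (a row contraction), and set Δ := 1 − ∑_s T_s T_s*. Suppose Φ^m(1) → 0 strongly, where Φ(X) := ∑_s T_s X T_s*. Then for every h ∈ H, ∑_{α} ‖Δ^{1/2} T_α* h‖² = ‖h‖², where the sum is over all words α in n letters and T_α is the corresponding product. -/

import Mathlib

/-! Since `Δ = 1 - Φ(1)`, summing `‖Δ^{1/2} T_α* h‖² = ⟪h, T_α Δ T_α* h⟫` over the words
of length `p` gives `⟪h, Φ^p(Δ) h⟫ = ⟪h, Φ^p(1) h⟫ - ⟪h, Φ^{p+1}(1) h⟫`. These nonnegative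
level sums telescope, and purity makes `⟪h, Φ^p(1) h⟫ → 0`, so the total is `‖h‖²`. -/

open ContinuousLinearMap Filter

/-- The product `T_{s₁} ∘ ⋯ ∘ T_{s_p}` associated with a word `α = [s₁,…,s_p]`. -/
noncomputable def listProd {H : Type*} [NormedAddCommGroup H] [InnerProductSpace ℂ H]
    {n : ℕ} (T : Fin n → H →L[ℂ] H) (α : List (Fin n)) : H →L[ℂ] H :=
  (α.map T).prod

theorem hasSum_sub_succ_of_tendsto {g : ℕ → ℝ} {l : ℝ} (hg : ∀ p, g (p + 1) ≤ g p)
    (hlim : Tendsto g atTop (nhds l)) : HasSum (fun p => g p - g (p + 1)) (g 0 - l) := by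
  rw [hasSum_iff_tendsto_nat_of_nonneg (fun p => sub_nonneg.2 (hg p))]
  simpa only [Finset.sum_range_sub'] using tendsto_const_nhds.sub hlim

theorem hasSum_of_hasSum_sum_ofFn {α : Type*} [Fintype α] {f : List α → ℝ} {a : ℝ}
    (hf : ∀ l, 0 ≤ f l) (h : HasSum (fun p => ∑ w : Fin p → α, f (List.ofFn w)) a) :
    HasSum f a := by
  rw [← List.equivSigmaTuple.symm.hasSum_iff]
  have hsum : Summable fun w : (Σ p, Fin p → α) => f (List.ofFn w.2) := by
    rw [summable_sigma_of_nonneg fun _ => hf _]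
    exact ⟨fun p => (hasSum_fintype _).summable, by simpa only [tsum_fintype] using h.summable⟩
  exact h.sigma_of_hasSum (fun p => hasSum_fintype _) hsum

theorem listProd_cons {H : Type*} [NormedAddCommGroup H] [InnerProductSpace ℂ H] {n : ℕ}
    (T : Fin n → H →L[ℂ] H) (s : Fin n) (l : List (Fin n)) :
    listProd T (s :: l) = T s * listProd T l := by
  simp [listProd]

section

variable {H : Type*} [NormedAddCommGroup H] [InnerProductSpace ℂ H] [CompleteSpace H] {n : ℕ}

noncomputable def conjSum (T : Fin n → H →L[ℂ] H) (X : H →L[ℂ] H) : H →L[ℂ] H :=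
  ∑ s, T s * X * adjoint (T s)

theorem sum_listProd_ofFn_conj (T : Fin n → H →L[ℂ] H) (p : ℕ) (X : H →L[ℂ] H) :
    ∑ w : Fin p → Fin n, listProd T (List.ofFn w) * X * adjoint (listProd T (List.ofFn w)) =
      (conjSum T)^[p] X := by
  induction p with
  | zero => simp [listProd, ← star_eq_adjoint]
  | succ p ih =>
    rw [Function.iterate_succ_apply', ← ih, ← (Fin.consEquiv fun _ => Fin n).sum_comp,
      Fintype.sum_prod_type, conjSum]
    refine Finset.sum_congr rfl fun s _ => ?_
    simp only [Fin.consEquiv, Equiv.coe_fn_mk, List.ofFn_cons, listProd_cons, ← star_eq_adjoint,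
      star_mul, Finset.mul_sum, Finset.sum_mul, mul_assoc]

theorem sum_listProd_ofFn_conj_defect (T : Fin n → H →L[ℂ] H) (p : ℕ) :
    ∑ w : Fin p → Fin n, listProd T (List.ofFn w) * (1 - ∑ s, T s * adjoint (T s)) *
        adjoint (listProd T (List.ofFn w)) =
      (conjSum T)^[p] 1 - (conjSum T)^[p + 1] 1 := by
  have hdefect : 1 - ∑ s, T s * adjoint (T s) = 1 - conjSum T 1 := by simp [conjSum]
  simp only [hdefect, mul_sub, sub_mul, Finset.sum_sub_distrib, sum_listProd_ofFn_conj,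
    Function.iterate_succ_apply]

theorem norm_sq_apply_adjoint_apply {R : H →L[ℂ] H} (hR : IsSelfAdjoint R) (A : H →L[ℂ] H)
    (h : H) :
    ‖R (adjoint A h)‖ ^ 2 = RCLike.re (inner ℂ h ((A * (R * R) * adjoint A) h)) := by
  rw [apply_norm_sq_eq_inner_adjoint_right, hR.adjoint_eq, adjoint_inner_left]
  rfl

end

theorem stmt14_general {H : Type*} [NormedAddCommGroup H] [InnerProductSpace ℂ H] [CompleteSpace H]
    (n : ℕ) (T : Fin n → H →L[ℂ] H)
    (hpure : ∀ x : H, Tendsto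
      (fun m => ((fun X : H →L[ℂ] H => ∑ s, T s * X * adjoint (T s))^[m] 1) x)
      atTop (nhds 0))
    -- R is the positive square root Δ^{1/2} of Δ := 1 - ∑_s T_s T_s*
    (R : H →L[ℂ] H) (hR : R.IsPositive)
    (hR2 : R * R = 1 - ∑ s, T s * adjoint (T s)) :
    ∀ h : H,
      HasSum (fun α : List (Fin n) => ‖R (adjoint (listProd T α) h)‖ ^ 2) (‖h‖ ^ 2) := by
  intro h
  set g : ℕ → ℝ := fun p => RCLike.re (inner ℂ h (((conjSum T)^[p] 1) h))
  have hlevel (p : ℕ) :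
      ∑ w : Fin p → Fin n, ‖R (adjoint (listProd T (List.ofFn w)) h)‖ ^ 2 =
        g p - g (p + 1) := by
    simp only [norm_sq_apply_adjoint_apply hR.isSelfAdjoint, hR2, ← map_sum, ← inner_sum,
      ← sum_apply, sum_listProd_ofFn_conj_defect, g, sub_apply, inner_sub_right, map_sub]
  have hg_anti (p : ℕ) : g (p + 1) ≤ g p :=
    sub_nonneg.1 (hlevel p ▸ Finset.sum_nonneg fun _ _ => by positivity)
  have hg_lim : Tendsto g atTop (nhds 0) := by
    have := (RCLike.continuous_re.tendsto (inner ℂ h 0)).comp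
      (tendsto_const_nhds.inner (𝕜 := ℂ) (hpure h))
    rwa [inner_zero_right, map_zero] at this
  have hg_zero : g 0 = ‖h‖ ^ 2 := inner_self_eq_norm_sq h
  refine hasSum_of_hasSum_sum_ofFn (fun _ => by positivity) ?_
  simpa only [hlevel, hg_zero, sub_zero] using hasSum_sub_succ_of_tendsto hg_anti hg_lim

theorem stmt14 {H : Type*} [NormedAddCommGroup H] [InnerProductSpace ℂ H] [CompleteSpace H]
    (n : ℕ) (T : Fin n → H →L[ℂ] H)
    (hrow : ((1 : H →L[ℂ] H) - ∑ s, T s * adjoint (T s)).IsPositive)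
    (hpure : ∀ x : H, Tendsto
      (fun m => ((fun X : H →L[ℂ] H => ∑ s, T s * X * adjoint (T s))^[m] 1) x)
      atTop (nhds 0))
    -- R is the positive square root Δ^{1/2} of Δ := 1 - ∑_s T_s T_s*
    (R : H →L[ℂ] H) (hR : R.IsPositive)
    (hR2 : R * R = 1 - ∑ s, T s * adjoint (T s)) :
    ∀ h : H,
      HasSum (fun α : List (Fin n) => ‖R (adjoint (listProd T α) h)‖ ^ 2) (‖h‖ ^ 2) :=
  stmt14_general n T hpure R hR hR2
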